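/- Let Λ > 0 and 0 < α < 1. For every n ≥ 0 and every ψ ∈ L²(ℝ³ × (ℝ³)ⁿ; ℂ) with ‖Pψ‖ < ∞: ∫ |G(k_{n+1})|² |Pₙ|² |ψ(l,k₁,…,kₙ)|² / ( |P_{n+1}|² + H_f^{n+1} + α³ )² dl dk₁⋯dk_{n+1} ≤ (2/π) ln( (Λ + α³)/α³ ) ‖Pψ‖². -/

import Mathlib

/-!
Dropping `|P_{n+1}|² + H_f^n ≥ 0` from the denominator bounds the integrand by
`|Pₙ|² |ψ|² · |G(k)|² / (|k| + α³)²`, which separates the variables. In polar coordinates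
`∫ |G(k)|² / (|k| + α³)² dk = (2/π) ∫₀^Λ r / (r + α³)² dr`,
which is at most `(2/π) ∫₀^Λ dr / (r + α³) = (2/π) ln((Λ + α³)/α³)`.
-/

open MeasureTheory Real Set

theorem integral_fun_norm_euclideanSpace_fin_three (f : ℝ → ℝ) :
    ∫ x : EuclideanSpace ℝ (Fin 3), f ‖x‖ = 4 * π * ∫ y in Ioi 0, y ^ 2 * f y := by
  rw [integral_fun_norm_addHaar volume f, measureReal_def]
  simp only [finrank_euclideanSpace, Fintype.card_fin, EuclideanSpace.volume_ball_fin_three,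
    ENNReal.ofReal_one, one_pow, one_mul, smul_eq_mul]
  rw [ENNReal.toReal_ofReal (by positivity)]
  push_cast
  ring

/-- `χ(r)² / (2π² r)`, the polarization-summed `|G(k)|²` at `|k| = r`. -/
noncomputable def formFactorSq (Λ r : ℝ) : ℝ := if r ≤ Λ then 1 / (2 * π ^ 2 * r) else 0

section FormFactor

variable {Λ a : ℝ}

lemma measurable_formFactorSq : Measurable (formFactorSq Λ) :=
  Measurable.ite measurableSet_Iic (by fun_prop) measurable_const

lemma formFactorSq_nonneg {r : ℝ} (hr : 0 ≤ r) : 0 ≤ formFactorSq Λ r := by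
  unfold formFactorSq
  split_ifs <;> positivity

lemma integral_Ioc_inv_add (hΛ : 0 ≤ Λ) (ha : 0 < a) :
    ∫ r in Ioc 0 Λ, (r + a)⁻¹ = log ((Λ + a) / a) := by
  rw [← intervalIntegral.integral_of_le hΛ, intervalIntegral.integral_comp_add_right
    (fun r => r⁻¹), zero_add, integral_inv_of_pos ha (by linarith)]

lemma sq_mul_formFactorSq_div_le (ha : 0 ≤ a) {r : ℝ} (hr : 0 < r) :
    r ^ 2 * (formFactorSq Λ r / (r + a) ^ 2) ≤
      (Ioc 0 Λ).indicator (fun r => (r + a)⁻¹ / (2 * π ^ 2)) r := by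
  unfold formFactorSq
  by_cases hrΛ : r ≤ Λ
  · rw [if_pos hrΛ, indicator_of_mem (show r ∈ Ioc 0 Λ from ⟨hr, hrΛ⟩)]
    have hra : 0 < r + a := by positivity
    calc r ^ 2 * (1 / (2 * π ^ 2 * r) / (r + a) ^ 2)
        = r / (r + a) * ((r + a)⁻¹ / (2 * π ^ 2)) := by field_simp
      _ ≤ 1 * ((r + a)⁻¹ / (2 * π ^ 2)) := by
          gcongr
          exact (div_le_one hra).2 (by linarith)
      _ = (r + a)⁻¹ / (2 * π ^ 2) := one_mul _
  · rw [if_neg hrΛ, indicator_of_notMem (fun h => hrΛ h.2)]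
    simp

lemma integrable_indicator_Ioc_inv_add_div (ha : 0 < a) (c : ℝ) :
    Integrable ((Ioc 0 Λ).indicator fun r => (r + a)⁻¹ / c) := by
  have hcont : ContinuousOn (fun r => (r + a)⁻¹) (Icc 0 Λ) :=
    (continuous_add_const a).continuousOn.inv₀ fun r hr => by linarith [hr.1]
  exact (integrable_indicator_iff measurableSet_Ioc).2
    (Integrable.div_const (hcont.integrableOn_Icc.mono_set Ioc_subset_Icc_self) c)

lemma integrableOn_sq_mul_formFactorSq_div (ha : 0 < a) :
    IntegrableOn (fun r => r ^ 2 * (formFactorSq Λ r / (r + a) ^ 2)) (Ioi 0) := by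
  have hmeas : Measurable fun r => r ^ 2 * (formFactorSq Λ r / (r + a) ^ 2) :=
    (measurable_id.pow_const 2).mul (measurable_formFactorSq.div (by fun_prop))
  refine (integrable_indicator_Ioc_inv_add_div (Λ := Λ) ha (2 * π ^ 2)).integrableOn.mono'
    hmeas.aestronglyMeasurable ((ae_restrict_iff' measurableSet_Ioi).2 (.of_forall fun r hr => ?_))
  rw [Real.norm_of_nonneg (by have := formFactorSq_nonneg (Λ := Λ) (le_of_lt hr); positivity)]
  exact sq_mul_formFactorSq_div_le ha.le hr

lemma setIntegral_sq_mul_formFactorSq_div_le (hΛ : 0 ≤ Λ) (ha : 0 < a) :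
    ∫ r in Ioi 0, r ^ 2 * (formFactorSq Λ r / (r + a) ^ 2) ≤
      log ((Λ + a) / a) / (2 * π ^ 2) := by
  calc ∫ r in Ioi 0, r ^ 2 * (formFactorSq Λ r / (r + a) ^ 2)
      ≤ ∫ r in Ioi 0, (Ioc 0 Λ).indicator (fun r => (r + a)⁻¹ / (2 * π ^ 2)) r :=
        setIntegral_mono_on (integrableOn_sq_mul_formFactorSq_div ha)
          (integrable_indicator_Ioc_inv_add_div (Λ := Λ) ha (2 * π ^ 2)).integrableOn
          measurableSet_Ioi fun r hr => sq_mul_formFactorSq_div_le ha.le hr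
    _ = log ((Λ + a) / a) / (2 * π ^ 2) := by
        rw [setIntegral_indicator measurableSet_Ioc, inter_eq_right.2 Ioc_subset_Ioi_self,
          integral_div, integral_Ioc_inv_add hΛ ha]

lemma integrable_formFactorSq_div (ha : 0 < a) :
    Integrable fun k : EuclideanSpace ℝ (Fin 3) =>
      formFactorSq Λ ‖k‖ / (‖k‖ + a) ^ 2 := by
  rw [integrable_fun_norm_addHaar volume (f := fun r => formFactorSq Λ r / (r + a) ^ 2)]
  simpa [finrank_euclideanSpace] using integrableOn_sq_mul_formFactorSq_div (Λ := Λ) ha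

lemma integral_formFactorSq_div_le (hΛ : 0 ≤ Λ) (ha : 0 < a) :
    ∫ k : EuclideanSpace ℝ (Fin 3), formFactorSq Λ ‖k‖ / (‖k‖ + a) ^ 2 ≤
      2 / π * log ((Λ + a) / a) := by
  rw [integral_fun_norm_euclideanSpace_fin_three fun r => formFactorSq Λ r / (r + a) ^ 2]
  calc 4 * π * ∫ r in Ioi 0, r ^ 2 * (formFactorSq Λ r / (r + a) ^ 2)
      ≤ 4 * π * (log ((Λ + a) / a) / (2 * π ^ 2)) := by
        gcongr
        exact setIntegral_sq_mul_formFactorSq_div_le hΛ ha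
    _ = 2 / π * log ((Λ + a) / a) := by field_simp; ring

end FormFactor

theorem integral_prod_le_mul_integral {α β : Type*} [MeasurableSpace α] [MeasurableSpace β]
    {μ : Measure α} {ν : Measure β} [SFinite μ] [SFinite ν]
    {f : α × β → ℝ} {w : α → ℝ} {g : β → ℝ} {C : ℝ} (hf : 0 ≤ f)
    (hfwg : ∀ p, f p ≤ w p.1 * g p.2) (hw : Integrable w μ) (hw0 : 0 ≤ w)
    (hg : Integrable g ν) (hgC : ∫ y, g y ∂ν ≤ C) :
    ∫ p, f p ∂μ.prod ν ≤ C * ∫ x, w x ∂μ :=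
  calc ∫ p, f p ∂μ.prod ν ≤ ∫ p, w p.1 * g p.2 ∂μ.prod ν :=
        integral_mono_of_nonneg (.of_forall hf) (hw.mul_prod hg) (.of_forall hfwg)
    _ = (∫ x, w x ∂μ) * ∫ y, g y ∂ν := integral_prod_mul w g
    _ ≤ (∫ x, w x ∂μ) * C := by gcongr; exact integral_nonneg hw0
    _ = C * ∫ x, w x ∂μ := mul_comm _ _

theorem PD_diagonal_bound_general (Λ α : ℝ) (hΛ : 0 < Λ) (hα : 0 < α)
    (n : ℕ)
    (ψ : EuclideanSpace ℝ (Fin 3) → (Fin n → EuclideanSpace ℝ (Fin 3)) → ℂ)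
    (hP : Integrable
      (fun p : EuclideanSpace ℝ (Fin 3) × (Fin n → EuclideanSpace ℝ (Fin 3)) =>
        ‖p.1 - ∑ i, p.2 i‖ ^ 2 * ‖ψ p.1 p.2‖ ^ 2) volume) :
    (∫ p : (EuclideanSpace ℝ (Fin 3) × (Fin n → EuclideanSpace ℝ (Fin 3))) ×
          EuclideanSpace ℝ (Fin 3),
        (if ‖p.2‖ ≤ Λ then 1 / (2 * π ^ 2 * ‖p.2‖) else 0) *
          (‖p.1.1 - ∑ i, p.1.2 i‖ ^ 2 * ‖ψ p.1.1 p.1.2‖ ^ 2) /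
          (‖p.1.1 - (∑ i, p.1.2 i) - p.2‖ ^ 2 +
            ((∑ i, ‖p.1.2 i‖) + ‖p.2‖) + α ^ 3) ^ 2) ≤
      (2 / π) * Real.log ((Λ + α ^ 3) / α ^ 3) *
        ∫ p : EuclideanSpace ℝ (Fin 3) × (Fin n → EuclideanSpace ℝ (Fin 3)),
          ‖p.1 - ∑ i, p.2 i‖ ^ 2 * ‖ψ p.1 p.2‖ ^ 2 := by
  have ha : 0 < α ^ 3 := by positivity
  rw [Measure.volume_eq_prod]
  refine integral_prod_le_mul_integral (fun p => ?_) (fun ⟨q, k⟩ => ?_) hP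
    (fun q => by positivity) (integrable_formFactorSq_div (Λ := Λ) ha)
    (integral_formFactorSq_div_le hΛ.le ha)
  · have hG := formFactorSq_nonneg (Λ := Λ) (norm_nonneg p.2)
    exact div_nonneg (mul_nonneg hG (by positivity)) (sq_nonneg _)
  · have hsum : 0 ≤ ∑ i, ‖q.2 i‖ := Finset.sum_nonneg fun i _ => norm_nonneg _
    have hG := formFactorSq_nonneg (Λ := Λ) (norm_nonneg k)
    calc formFactorSq Λ ‖k‖ * (‖q.1 - ∑ i, q.2 i‖ ^ 2 * ‖ψ q.1 q.2‖ ^ 2) /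
          (‖q.1 - (∑ i, q.2 i) - k‖ ^ 2 + ((∑ i, ‖q.2 i‖) + ‖k‖) + α ^ 3) ^ 2
        ≤ formFactorSq Λ ‖k‖ * (‖q.1 - ∑ i, q.2 i‖ ^ 2 * ‖ψ q.1 q.2‖ ^ 2) /
            (‖k‖ + α ^ 3) ^ 2 := by
          gcongr
          linarith [sq_nonneg ‖q.1 - (∑ i, q.2 i) - k‖]
      _ = _ := by ring

/-- Diagonal part of Step 2 of Lemma B.1: with `|G(k)|² = χ(|k|)²/(2π²|k|)`,
`∫ |G(k_{n+1})|² |Pₙ|² |ψ|² / (|P_{n+1}|² + H_f^{n+1} + α³)² dl dk₁⋯dk_{n+1}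
  ≤ (2/π) ln((Λ+α³)/α³) ‖Pψ‖²`. -/
theorem PD_diagonal_bound (Λ α : ℝ) (hΛ : 0 < Λ) (hα : 0 < α) (hα1 : α < 1)
    (n : ℕ)
    (ψ : EuclideanSpace ℝ (Fin 3) → (Fin n → EuclideanSpace ℝ (Fin 3)) → ℂ)
    (hmeas : AEStronglyMeasurable
      (fun p : EuclideanSpace ℝ (Fin 3) × (Fin n → EuclideanSpace ℝ (Fin 3)) =>
        ψ p.1 p.2) volume)
    (hP : Integrable
      (fun p : EuclideanSpace ℝ (Fin 3) × (Fin n → EuclideanSpace ℝ (Fin 3)) =>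
        ‖p.1 - ∑ i, p.2 i‖ ^ 2 * ‖ψ p.1 p.2‖ ^ 2) volume) :
    (∫ p : (EuclideanSpace ℝ (Fin 3) × (Fin n → EuclideanSpace ℝ (Fin 3))) ×
          EuclideanSpace ℝ (Fin 3),
        (if ‖p.2‖ ≤ Λ then 1 / (2 * π ^ 2 * ‖p.2‖) else 0) *
          (‖p.1.1 - ∑ i, p.1.2 i‖ ^ 2 * ‖ψ p.1.1 p.1.2‖ ^ 2) /
          (‖p.1.1 - (∑ i, p.1.2 i) - p.2‖ ^ 2 +
            ((∑ i, ‖p.1.2 i‖) + ‖p.2‖) + α ^ 3) ^ 2) ≤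
      (2 / π) * Real.log ((Λ + α ^ 3) / α ^ 3) *
        ∫ p : EuclideanSpace ℝ (Fin 3) × (Fin n → EuclideanSpace ℝ (Fin 3)),
          ‖p.1 - ∑ i, p.2 i‖ ^ 2 * ‖ψ p.1 p.2‖ ^ 2 :=
  PD_diagonal_bound_general Λ α hΛ hα n ψ hP
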